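/- arXiv:1202.3113 — 7 statements merged into one kernel-verified Lean document; each statement's English description precedes it below -/
import Mathlib

section
/- There exist universal constants C, C' ≥ 1 such that for all real numbers γ > 0 and ε > 0 and every μ on the unit circle 𝕋 with γ < |μ - 1| < ε, for every ν ∈ 𝕋 there exists an integer p with 1 ≤ p ≤ ⌊C'/γ⌋ such that |μ^p - ν| ≤ C·ε. -/
/-!
Write `μ = e^{iθ}` with `θ = arg μ ∈ (-π, π]`. Then `|μ - 1| ≤ |θ| ≤ (π/2)|μ - 1|` (Jordan's
inequality), so `γ < |θ| < (π/2)ε`. The angles `pθ`, `p = 1, 2, …`, move in steps of length `|θ|`,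
so one of them comes within `|θ|` of `arg ν` modulo `2π` after at most `2π/|θ| + 1 ≤ 3π/γ` steps,
and since `t ↦ e^{it}` is 1-Lipschitz, `|μ^p - ν| ≤ |θ| < (π/2)ε`.
-/

open Real Complex

lemma exp_I_mul_arg_of_norm_eq_one {z : ℂ} (hz : ‖z‖ = 1) : exp (I * z.arg) = z := by
  simpa [hz, mul_comm] using norm_mul_exp_arg_mul_I z

lemma norm_exp_I_mul_ofReal_sub_exp_I_mul_ofReal_le (x y : ℝ) :
    ‖exp (I * x) - exp (I * y)‖ ≤ |x - y| := by
  have hfactor : exp (I * x) - exp (I * y) = exp (I * y) * (exp (I * ↑(x - y)) - 1) := by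
    rw [mul_sub, mul_one, ← Complex.exp_add]
    push_cast
    ring_nf
  rw [hfactor, norm_mul, norm_exp_I_mul_ofReal, one_mul]
  exact Real.norm_exp_I_mul_ofReal_sub_one_le

lemma abs_arg_le_pi_div_two_mul_norm_sub_one {z : ℂ} (hz : ‖z‖ = 1) :
    |z.arg| ≤ π / 2 * ‖z - 1‖ := by
  set θ := z.arg
  have hnorm : ‖z - 1‖ = 2 * |Real.sin (θ / 2)| := by
    have h := norm_exp_I_mul_ofReal_sub_one θ
    rwa [exp_I_mul_arg_of_norm_eq_one hz, Real.norm_eq_abs, abs_mul, abs_two] at h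
  have hsin : Real.sin |θ / 2| ≤ |Real.sin (θ / 2)| := by
    rcases abs_cases (θ / 2) with ⟨h, -⟩ | ⟨h, -⟩
    · rw [h]; exact le_abs_self _
    · rw [h, Real.sin_neg]; exact neg_le_abs _
  have hθ2 : |θ / 2| = |θ| / 2 := by rw [abs_div, abs_two]
  have hjordan := Real.mul_le_sin (abs_nonneg (θ / 2))
    (by rw [hθ2]; linarith [abs_arg_le_pi z])
  rw [hθ2] at hjordan hsin
  have hπ := Real.pi_pos
  calc |θ| = π / 2 * (2 * (2 / π * (|θ| / 2))) := by field_simp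
    _ ≤ π / 2 * ‖z - 1‖ := by rw [hnorm]; gcongr; linarith

lemma norm_sub_one_le_abs_arg {z : ℂ} (hz : ‖z‖ = 1) : ‖z - 1‖ ≤ |z.arg| := by
  simpa [exp_I_mul_arg_of_norm_eq_one hz] using
    norm_exp_I_mul_ofReal_sub_exp_I_mul_ofReal_le z.arg 0

lemma exists_nat_mul_near_add_int_mul {T θ : ℝ} (hT : 0 < T) (hθ : θ ≠ 0) (t : ℝ) :
    ∃ p : ℕ, 1 ≤ p ∧ (p : ℝ) ≤ T / |θ| + 1 ∧ ∃ k : ℤ, |p * θ - (t + k * T)| ≤ |θ| := by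
  wlog hθpos : 0 < θ generalizing θ t
  · obtain ⟨p, hp1, hpT, k, hk⟩ := this (neg_ne_zero.mpr hθ) (-t) (by grind)
    have hflip : p * θ - (t + (-k : ℤ) * T) = -(p * -θ - (-t + k * T)) := by push_cast; ring
    exact ⟨p, hp1, by simpa using hpT, -k, by rwa [hflip, abs_neg, ← abs_neg θ]⟩
  obtain ⟨hs0, hsT⟩ := toIcoMod_mem_Ico' hT t
  have hs : t + (-toIcoDiv hT 0 t : ℤ) * T = toIcoMod hT 0 t := by
    rw [← self_sub_toIcoDiv_zsmul, zsmul_eq_mul]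
    push_cast
    ring
  set s := toIcoMod hT 0 t
  -- `p` is the first index with `p * θ > s`, so `p * θ` overshoots `s` by at most `θ`.
  refine ⟨⌊s / θ⌋₊ + 1, le_add_self, ?_, -toIcoDiv hT 0 t, ?_⟩
  · have hfloor := Nat.floor_le (div_nonneg hs0 hθpos.le)
    rw [abs_of_pos hθpos]
    push_cast
    gcongr
    exact hfloor.trans (by gcongr)
  · have hfloor := Nat.floor_le (div_nonneg hs0 hθpos.le)
    have hlt := Nat.lt_floor_add_one (s / θ)
    rw [hs, abs_of_pos hθpos, abs_le]
    push_cast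
    rw [le_div_iff₀ hθpos] at hfloor
    rw [div_lt_iff₀ hθpos] at hlt
    constructor <;> nlinarith

lemma exists_pow_near_of_norm_eq_one {μ ν : ℂ} (hμ : ‖μ‖ = 1) (hμ1 : μ ≠ 1) (hν : ‖ν‖ = 1) :
    ∃ p : ℕ, 1 ≤ p ∧ (p : ℝ) ≤ 2 * π / |μ.arg| + 1 ∧ ‖μ ^ p - ν‖ ≤ |μ.arg| := by
  have harg : μ.arg ≠ 0 := fun h ↦ hμ1 (by simpa [h] using (exp_I_mul_arg_of_norm_eq_one hμ).symm)
  obtain ⟨p, hp1, hpT, k, hk⟩ := exists_nat_mul_near_add_int_mul two_pi_pos harg ν.arg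
  have hμp : μ ^ p = exp (I * ↑(p * μ.arg)) := by
    conv_lhs => rw [← exp_I_mul_arg_of_norm_eq_one hμ, ← Complex.exp_nat_mul]
    push_cast
    ring_nf
  have hν' : ν = exp (I * ↑(ν.arg + k * (2 * π))) := by
    rw [show I * ↑(ν.arg + k * (2 * π)) = I * ν.arg + k * (2 * π * I) by push_cast; ring,
      Complex.exp_add, exp_int_mul_two_pi_mul_I, mul_one, exp_I_mul_arg_of_norm_eq_one hν]
  refine ⟨p, hp1, hpT, ?_⟩
  calc ‖μ ^ p - ν‖ = ‖exp (I * ↑(p * μ.arg)) - exp (I * ↑(ν.arg + k * (2 * π)))‖ := by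
        rw [← hμp, ← hν']
    _ ≤ |p * μ.arg - (ν.arg + k * (2 * π))| := norm_exp_I_mul_ofReal_sub_exp_I_mul_ofReal_le _ _
    _ ≤ |μ.arg| := hk

theorem stmt_0 :
    ∃ C C' : ℝ, 1 ≤ C ∧ 1 ≤ C' ∧
      ∀ γ ε : ℝ, 0 < γ → 0 < ε →
        ∀ μ : ℂ, ‖μ‖ = 1 →
          γ < ‖μ - 1‖ → ‖μ - 1‖ < ε →
            ∀ ν : ℂ, ‖ν‖ = 1 →
              ∃ p : ℕ, 1 ≤ p ∧ (p : ℤ) ≤ ⌊C' / γ⌋ ∧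
                ‖μ ^ p - ν‖ ≤ C * ε := by
  refine ⟨π / 2, 3 * π, one_le_pi_div_two, by linarith [pi_gt_three], ?_⟩
  intro γ ε hγ _ μ hμ hγμ hμε ν hν
  have hμ1 : μ ≠ 1 := by rintro rfl; simp at hγμ; linarith
  have hγarg : γ < |μ.arg| := hγμ.trans_le (norm_sub_one_le_abs_arg hμ)
  have hargε : |μ.arg| < π / 2 * ε :=
    (abs_arg_le_pi_div_two_mul_norm_sub_one hμ).trans_lt (by gcongr)
  obtain ⟨p, hp1, hpT, hp⟩ := exists_pow_near_of_norm_eq_one hμ hμ1 hν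
  refine ⟨p, hp1, Int.le_floor.mpr ?_, hp.trans hargε.le⟩
  have hπγ : 1 ≤ π / γ := by
    rw [le_div_iff₀ hγ]; linarith [hγarg.trans_le (abs_arg_le_pi μ)]
  calc ((p : ℤ) : ℝ) ≤ 2 * π / γ + π / γ := by
        push_cast; linarith [div_le_div_of_nonneg_left two_pi_pos.le hγ hγarg.le]
    _ = 3 * π / γ := by ring
end

section
/- For any ε > 0 there exist positive integers Σ and Θ such that for every λ on the unit circle 𝕋, every pair of positive integers L, H, and every integer S, at least one of the following holds: either |λ^{HΣL} - 1| < ε, or there exists j ∈ {1, ..., Θ} such that |λ^{HLj + S} - 1| < ε. -/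
/-!
Write `z ^ (H * L) = exp (2πiα)` and `z ^ S = exp (2πiβ)`. By Dirichlet's theorem some
`1 ≤ q ≤ Q` has `θ = qα - k` with `|θ| ≤ 1/(Q+1)` for an integer `k`. If `|θ| ≤ η`, then since
`q ∣ Q!` the number `Q! α` is within `Q! η` of an integer, so `z ^ (H * Q! * L)` is close to `1`.
Otherwise `η < |θ|`, and the points `β + nθ`, which move in steps of size `|θ|`, come within `|θ|`
of an integer for some `n ≤ 1/η + 1`; then `j = qn` works. Taking `Σ = Q!` with `Q ≈ 2π/ε`, and
`η` small compared with `1/Q!`, makes both bounds uniform.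
-/

open Real Complex
open scoped Nat

lemma norm_exp_two_pi_mul_I_sub_one_le (x : ℝ) (m : ℤ) :
    ‖exp (2 * π * x * I) - 1‖ ≤ 2 * π * |x - m| := by
  have hshift : exp (2 * π * x * I) = exp (I * ↑(2 * π * (x - m))) := by
    rw [show I * ↑(2 * π * (x - m)) = 2 * π * x * I - m * (2 * π * I) by push_cast; ring,
      Complex.exp_sub, exp_int_mul_two_pi_mul_I, div_one]
  rw [hshift]
  calc ‖exp (I * ↑(2 * π * (x - m))) - 1‖ ≤ ‖2 * π * (x - m)‖ := norm_exp_I_mul_ofReal_sub_one_le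
    _ = 2 * π * |x - m| := by rw [Real.norm_eq_abs, abs_mul, abs_of_pos two_pi_pos]

lemma exists_eq_exp_two_pi_mul_I {w : ℂ} (hw : ‖w‖ = 1) : ∃ α : ℝ, w = exp (2 * π * α * I) := by
  refine ⟨w.arg / (2 * π), ?_⟩
  conv_lhs => rw [← norm_mul_exp_arg_mul_I w, hw]
  push_cast
  field_simp

lemma exists_nat_abs_mul_add_sub_int_le_of_pos {θ : ℝ} (hθ : 0 < θ) (β : ℝ) :
    ∃ n : ℕ, 1 ≤ n ∧ (n : ℝ) ≤ 1 / θ + 1 ∧ ∃ m : ℤ, |n * θ + β - m| ≤ θ := by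
  set t := Int.fract (-β)
  have ht : t < 1 := Int.fract_lt_one _
  set n₀ := ⌊t / θ⌋₊
  have hn₀_le : n₀ * θ ≤ t :=
    (le_div_iff₀ hθ).1 (Nat.floor_le (div_nonneg (Int.fract_nonneg _) hθ.le))
  have hn₀_gt : t < (n₀ + 1) * θ := (div_lt_iff₀ hθ).1 (Nat.lt_floor_add_one _)
  refine ⟨n₀ + 1, le_add_self, ?_, -⌊-β⌋, ?_⟩
  · have : (n₀ : ℝ) ≤ 1 / θ := (le_div_iff₀ hθ).2 (by linarith)
    push_cast
    linarith
  · have hβ : β + ⌊-β⌋ = -t := by simp only [t, Int.fract]; ring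
    rw [abs_le]
    push_cast
    constructor <;> linarith

lemma exists_nat_abs_mul_add_sub_int_le {θ : ℝ} (hθ : θ ≠ 0) (β : ℝ) :
    ∃ n : ℕ, 1 ≤ n ∧ (n : ℝ) ≤ 1 / |θ| + 1 ∧ ∃ m : ℤ, |n * θ + β - m| ≤ |θ| := by
  rcases hθ.lt_or_gt with hneg | hpos
  · obtain ⟨n, hn1, hnθ, m, hm⟩ := exists_nat_abs_mul_add_sub_int_le_of_pos (neg_pos.2 hneg) (-β)
    refine ⟨n, hn1, by rwa [abs_of_neg hneg], -m, ?_⟩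
    rw [abs_of_neg hneg, ← abs_neg]
    push_cast
    convert hm using 2
    ring
  · obtain ⟨n, hn1, hnθ, m, hm⟩ := exists_nat_abs_mul_add_sub_int_le_of_pos hpos β
    exact ⟨n, hn1, by rwa [abs_of_pos hpos], m, by rwa [abs_of_pos hpos]⟩

lemma factorial_mul_near_int_or_exists_mul_add_near_int {Q : ℕ} (hQ : 0 < Q) {η : ℝ}
    (hη : 0 < η) (α β : ℝ) :
    (∃ m : ℤ, |Q ! * α - m| ≤ Q ! * η) ∨
      ∃ j : ℕ, 1 ≤ j ∧ j ≤ Q * (⌈1 / η⌉₊ + 1) ∧ ∃ m : ℤ, |j * α + β - m| ≤ 1 / (Q + 1) := by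
  obtain ⟨q, hq0, hqQ, hq⟩ := Real.exists_nat_abs_mul_sub_round_le α hQ
  set θ := q * α - round (q * α)
  rcases le_or_gt |θ| η with hsmall | hlarge
  · left
    obtain ⟨d, hd⟩ := Nat.dvd_factorial hq0 hqQ
    have hdQ : (d : ℝ) ≤ Q ! := by
      exact_mod_cast hd ▸ Nat.le_mul_of_pos_left d hq0
    refine ⟨d * round (q * α), ?_⟩
    calc |(Q ! : ℝ) * α - ↑(d * round (q * α))| = d * |θ| := by
          rw [hd, ← abs_of_nonneg (Nat.cast_nonneg (α := ℝ) d), ← abs_mul]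
          push_cast
          congr 1
          ring
      _ ≤ Q ! * η := by gcongr
  · right
    have hθ : θ ≠ 0 := abs_pos.1 (hη.trans hlarge)
    obtain ⟨n, hn1, hnθ, m, hm⟩ := exists_nat_abs_mul_add_sub_int_le hθ β
    have hn : n ≤ ⌈1 / η⌉₊ + 1 := by
      have : 1 / |θ| ≤ ⌈1 / η⌉₊ :=
        (one_div_le_one_div_of_le hη hlarge.le).trans (Nat.le_ceil _)
      have : (n : ℝ) ≤ ⌈1 / η⌉₊ + 1 := by linarith
      exact_mod_cast this
    refine ⟨q * n, Nat.one_le_iff_ne_zero.2 (by positivity), ?_, m + n * round (q * α), ?_⟩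
    · exact Nat.mul_le_mul hqQ hn
    · calc |((q * n : ℕ) : ℝ) * α + β - ↑(m + n * round (q * α))| = |n * θ + β - m| := by
            push_cast
            congr 1
            ring
        _ ≤ 1 / (Q + 1) := hm.trans hq

theorem exists_pow_near_one_or_pow_mul_near_one {ε : ℝ} (hε : 0 < ε) :
    ∃ Sg Θ : ℕ, 0 < Sg ∧ 0 < Θ ∧ ∀ w c : ℂ, ‖w‖ = 1 → ‖c‖ = 1 →
      ‖w ^ Sg - 1‖ < ε ∨ ∃ j : ℕ, 1 ≤ j ∧ j ≤ Θ ∧ ‖w ^ j * c - 1‖ < ε := by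
  set Q := ⌈2 * π / ε⌉₊
  have hQ : 0 < Q := Nat.ceil_pos.2 (by positivity)
  have hQε : 2 * π * (1 / (Q + 1)) < ε := by
    have := Nat.le_ceil (2 * π / ε)
    rw [mul_one_div, div_lt_iff₀ (by positivity)]
    rw [div_le_iff₀ hε] at this
    nlinarith
  set η := ε / (4 * π * Q !)
  have hη : 0 < η := by positivity
  refine ⟨Q !, Q * (⌈1 / η⌉₊ + 1), Q.factorial_pos, by positivity, fun w c hw hc => ?_⟩
  obtain ⟨α, rfl⟩ := exists_eq_exp_two_pi_mul_I hw
  obtain ⟨β, rfl⟩ := exists_eq_exp_two_pi_mul_I hc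
  rcases factorial_mul_near_int_or_exists_mul_add_near_int hQ hη α β with
    ⟨m, hm⟩ | ⟨j, hj1, hjΘ, m, hm⟩
  · left
    rw [← Complex.exp_nat_mul, show (Q ! : ℂ) * (2 * π * α * I) = 2 * π * ↑(Q ! * α) * I by
      push_cast; ring]
    calc _ ≤ 2 * π * |Q ! * α - m| := norm_exp_two_pi_mul_I_sub_one_le _ m
      _ ≤ 2 * π * (Q ! * η) := by gcongr
      _ < ε := by
        rw [show 2 * π * (Q ! * η) = ε / 2 by simp only [η]; field_simp; ring]
        linarith
  · right
    refine ⟨j, hj1, hjΘ, ?_⟩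
    rw [← Complex.exp_nat_mul, ← Complex.exp_add,
      show (j : ℂ) * (2 * π * α * I) + 2 * π * β * I = 2 * π * ↑(j * α + β) * I by
        push_cast; ring]
    calc _ ≤ 2 * π * |j * α + β - m| := norm_exp_two_pi_mul_I_sub_one_le _ m
      _ ≤ 2 * π * (1 / (Q + 1)) := by gcongr
      _ < ε := hQε

theorem stmt_1 :
    ∀ ε : ℝ, 0 < ε →
      ∃ Sg Θ : ℕ, 0 < Sg ∧ 0 < Θ ∧
        ∀ z : ℂ, ‖z‖ = 1 →
          ∀ L H : ℕ, 0 < L → 0 < H → ∀ S : ℤ,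
            ‖z ^ (H * Sg * L) - 1‖ < ε ∨
            ∃ j : ℕ, 1 ≤ j ∧ j ≤ Θ ∧
              ‖z ^ ((H * L * j : ℤ) + S) - 1‖ < ε := by
  intro ε hε
  obtain ⟨Sg, Θ, hSg, hΘ, hdich⟩ := exists_pow_near_one_or_pow_mul_near_one hε
  refine ⟨Sg, Θ, hSg, hΘ, fun z hz L H _ _ S => ?_⟩
  have hz0 : z ≠ 0 := norm_ne_zero_iff.1 (hz ▸ one_ne_zero)
  rcases hdich (z ^ (H * L)) (z ^ S) (by simp [hz]) (by simp [hz]) with h | ⟨j, hj1, hjΘ, h⟩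
  · left
    rwa [mul_right_comm, pow_mul]
  · right
    refine ⟨j, hj1, hjΘ, ?_⟩
    rwa [zpow_add₀ hz0, ← Nat.cast_mul, ← Nat.cast_mul, zpow_natCast, pow_mul]
end

section
/- There exists a positive constant M such that for any strictly increasing sequence of positive integers (m_k)_{k≥1} satisfying m_{k+1}/m_k > 2 for all k ≥ 1, the set of λ ∈ 𝕋 such that |λ^{m_k} - 1| ≤ M · m_k/m_{k+1} for all k ≥ 1 is uncountable. -/
/-!
Levels with `m (k + 1) ≤ 3 m k` are harmless, since `‖z ^ n - 1‖ ≤ 2`. At the remaining jumps it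
suffices, for `z = exp (2πiθ)` and since a chord is shorter than its arc, that `m_k θ` lie within
`3 m_k / m_{k+1}` of an integer. The jumps themselves (if there are infinitely many) or the powers
of a large integer (otherwise) give scales `q_i` with `q_{i+1} > 3 q_i` such that every jump `k`
has `q_i ∣ m_k` and `m_{k+1} ≤ q_{i+1}` for some `i`; so it is enough that `q_i θ` lie within
`3 q_i / q_{i+1}` of an integer for every `i`. These `θ` contain a Cantor set: the numerators
`a_{i+1} = ⌈q_{i+1} a_i / q_i⌉ + ε_i` make `a_i / q_i` increase to a limit `θ_ε` that stays within
`3 / q_{i+1}` of them, and where two bit sequences `ε` first differ, the gap `1 / q_{i+1}` they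
open exceeds this tail, so `ε ↦ θ_ε` is injective.
-/

open Real Set Function

section CantorConstruction

variable (q : ℕ → ℕ) (ε : ℕ → Bool)

noncomputable def cantorNum : ℕ → ℤ
  | 0 => 0
  | i + 1 => ⌈(q (i + 1) : ℝ) * (cantorNum i / q i)⌉ + if ε i then 1 else 0

noncomputable def cantorApprox (i : ℕ) : ℝ := cantorNum q ε i / q i

noncomputable def cantorPoint : ℝ := ⨆ i, cantorApprox q ε i

variable {q}

lemma cantorApprox_succ (i : ℕ) :
    cantorApprox q ε (i + 1) =
      (⌈(q (i + 1) : ℝ) * cantorApprox q ε i⌉ + if ε i then 1 else 0) / q (i + 1) := by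
  simp only [cantorApprox, cantorNum]
  push_cast
  rfl

lemma cantorApprox_le_succ {i : ℕ} (hq : 0 < q (i + 1)) :
    cantorApprox q ε i ≤ cantorApprox q ε (i + 1) := by
  rw [cantorApprox_succ, le_div_iff₀ (by exact_mod_cast hq)]
  have := Int.le_ceil ((q (i + 1) : ℝ) * cantorApprox q ε i)
  split_ifs <;> linarith

lemma cantorApprox_succ_lt {i : ℕ} (hq : 0 < q (i + 1)) :
    cantorApprox q ε (i + 1) < cantorApprox q ε i + 2 / q (i + 1) := by
  have hq' : (0 : ℝ) < q (i + 1) := by exact_mod_cast hq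
  rw [cantorApprox_succ, div_lt_iff₀ hq', add_mul, div_mul_cancel₀ _ hq'.ne']
  have := Int.ceil_lt_add_one ((q (i + 1) : ℝ) * cantorApprox q ε i)
  split_ifs <;> linarith

lemma cantorNum_congr {ε ε' : ℕ → Bool} {i : ℕ} (h : ∀ j < i, ε j = ε' j) :
    cantorNum q ε i = cantorNum q ε' i := by
  induction i with
  | zero => rfl
  | succ i ih =>
    simp only [cantorNum, ih fun j hj => h j (by omega), h i (by omega)]

variable (hq : ∀ i, 3 * q i < q (i + 1))
include hq

lemma cantorApprox_monotone : Monotone (cantorApprox q ε) :=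
  monotone_nat_of_le_succ fun i => cantorApprox_le_succ ε (by have := hq i; omega)

lemma cantorApprox_add_antitone : Antitone fun i => cantorApprox q ε i + 3 / q (i + 1) := by
  refine antitone_nat_of_succ_le fun i => ?_
  have hq₁ : (0 : ℝ) < q (i + 1) := by have := hq i; exact_mod_cast (by omega : 0 < q (i + 1))
  have hq₂ : 3 * (q (i + 1) : ℝ) ≤ q (i + 2) := by exact_mod_cast (hq (i + 1)).le
  have htail : 3 / (q (i + 2) : ℝ) ≤ 1 / q (i + 1) := by
    rw [div_le_div_iff₀ (by linarith) hq₁]; linarith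
  have := cantorApprox_succ_lt ε (i := i) (by exact_mod_cast hq₁)
  have h3 : (3 : ℝ) / q (i + 1) = 2 / q (i + 1) + 1 / q (i + 1) := by ring
  linarith

lemma cantorPoint_mem_Icc (i : ℕ) :
    cantorPoint q ε ∈ Icc (cantorApprox q ε i) (cantorApprox q ε i + 3 / q (i + 1)) :=
  mem_iInter.1 ((cantorApprox_monotone ε hq).ciSup_mem_iInter_Icc_of_antitone
    (cantorApprox_add_antitone ε hq) fun _ => le_add_of_nonneg_right (by positivity)) i

lemma natCast_mul_cantorApprox (i : ℕ) : (q i : ℝ) * cantorApprox q ε i = cantorNum q ε i := by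
  cases i with
  | zero => simp [cantorApprox, cantorNum]
  | succ i =>
    have : (q (i + 1) : ℝ) ≠ 0 := by have := hq i; exact_mod_cast (by omega : q (i + 1) ≠ 0)
    exact mul_div_cancel₀ _ this

lemma abs_mul_cantorPoint_sub_le (i : ℕ) :
    |q i * cantorPoint q ε - cantorNum q ε i| ≤ 3 * q i / q (i + 1) := by
  obtain ⟨hlo, hhi⟩ := cantorPoint_mem_Icc ε hq i
  rw [← natCast_mul_cantorApprox ε hq, ← mul_sub, abs_mul, Nat.abs_cast,
    abs_of_nonneg (sub_nonneg.2 hlo), mul_comm 3, mul_div_assoc]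
  exact mul_le_mul_of_nonneg_left (by linarith) (Nat.cast_nonneg _)

lemma cantorPoint_lt {ε ε' : ℕ → Bool} {i : ℕ} (h : ∀ j < i, ε j = ε' j) (hε : ε i = false)
    (hε' : ε' i = true) : cantorPoint q ε < cantorPoint q ε' := by
  have hq₁ : (0 : ℝ) < q (i + 1) := by have := hq i; exact_mod_cast (by omega : 0 < q (i + 1))
  have hq₂ : 3 * (q (i + 1) : ℝ) < q (i + 2) := by exact_mod_cast hq (i + 1)
  have hjump : cantorApprox q ε' (i + 1) = cantorApprox q ε (i + 1) + 1 / q (i + 1) := by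
    rw [cantorApprox_succ, cantorApprox_succ, cantorApprox, cantorApprox, cantorNum_congr h,
      hε, hε']
    field_simp
    simp
  have htail : 3 / (q (i + 2) : ℝ) < 1 / q (i + 1) := by
    rw [div_lt_div_iff₀ (by linarith) hq₁]; linarith
  calc cantorPoint q ε ≤ cantorApprox q ε (i + 1) + 3 / q (i + 2) :=
        (cantorPoint_mem_Icc ε hq (i + 1)).2
    _ < cantorApprox q ε' (i + 1) := by rw [hjump]; linarith
    _ ≤ cantorPoint q ε' := (cantorPoint_mem_Icc ε' hq (i + 1)).1

lemma cantorPoint_strictMono : StrictMono fun x : Lex (ℕ → Bool) => cantorPoint q (ofLex x) := by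
  rintro x y ⟨i, hagree, hlt⟩
  exact cantorPoint_lt hq hagree (Bool.lt_iff.1 hlt).1 (Bool.lt_iff.1 hlt).2

lemma cantorPoint_injective : Injective (cantorPoint q) := fun _ _ h =>
  toLex.injective ((cantorPoint_strictMono hq).injective h)

lemma cantorPoint_mem_Ico (hq0 : 0 < q 0) : cantorPoint q ε ∈ Ico 0 1 := by
  obtain ⟨hlo, hhi⟩ := cantorPoint_mem_Icc ε hq 0
  have hq₁ : (4 : ℝ) ≤ q 1 := by have : 3 * q 0 < q 1 := hq 0; exact_mod_cast (by omega : 4 ≤ q 1)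
  have h3 : 3 / (q 1 : ℝ) < 1 := by rw [div_lt_one (by linarith)]; linarith
  simp only [cantorApprox, cantorNum, Int.cast_zero, zero_div, zero_add] at hlo hhi
  exact ⟨hlo, hhi.trans_lt h3⟩

theorem not_countable_setOf_abs_mul_sub_intCast_le (hq0 : 0 < q 0) :
    ¬ {θ ∈ Ico (0 : ℝ) 1 | ∀ i, ∃ a : ℤ, |q i * θ - a| ≤ 3 * q i / q (i + 1)}.Countable := by
  intro hS
  have : Uncountable (ℕ → Bool) := by
    rw [← Cardinal.aleph0_lt_mk_iff]
    simpa using Cardinal.cantor Cardinal.aleph0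
  refine not_countable_univ (MapsTo.countable_of_injOn (f := cantorPoint q) (fun ε _ => ?_)
    (cantorPoint_injective hq).injOn hS)
  exact ⟨cantorPoint_mem_Ico ε hq hq0, fun i => ⟨_, abs_mul_cantorPoint_sub_le ε hq i⟩⟩

end CantorConstruction

lemma norm_circleExp_pow_sub_one_le (θ : ℝ) (n : ℕ) (a : ℤ) :
    ‖(Circle.exp (2 * π * θ) : ℂ) ^ n - 1‖ ≤ 2 * π * |n * θ - a| := by
  have hpow : (Circle.exp (2 * π * θ) : ℂ) ^ n = Circle.exp (2 * π * (n * θ - a)) := by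
    rw [← Circle.coe_pow, ← Circle.exp_natCast_mul, mul_sub, Circle.exp_sub,
      Circle.exp_two_pi_mul_int, div_one, mul_left_comm]
  rw [hpow, Circle.coe_exp, mul_comm]
  calc _ ≤ ‖2 * π * (n * θ - a)‖ := norm_exp_I_mul_ofReal_sub_one_le
    _ = 2 * π * |n * θ - a| := by rw [Real.norm_eq_abs, abs_mul, abs_of_pos two_pi_pos]

lemma injOn_circleExp_two_pi_mul :
    InjOn (fun θ : ℝ => (Circle.exp (2 * π * θ) : ℂ)) (Ico 0 1) := by
  refine Circle.coe_injective.comp_injOn ((Circle.exp_injOn_Ico (a := 0) (b := 2 * π)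
    (by simp)).comp (mul_right_injective₀ two_pi_pos.ne').injOn fun θ hθ => ?_)
  constructor <;> nlinarith [hθ.1, hθ.2, two_pi_pos]

lemma norm_pow_sub_one_le_of_le_three_mul {z : ℂ} (hz : ‖z‖ = 1) {n n' : ℕ} (hn' : 0 < n')
    (h : n' ≤ 3 * n) : ‖z ^ n - 1‖ ≤ 6 * π * n / n' := by
  have hn'ℝ : (0 : ℝ) < n' := by exact_mod_cast hn'
  have hℝ : (n' : ℝ) ≤ 3 * n := by exact_mod_cast h
  calc ‖z ^ n - 1‖ ≤ ‖z ^ n‖ + ‖(1 : ℂ)‖ := norm_sub_le _ _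
    _ = 2 := by rw [norm_pow, hz]; norm_num
    _ ≤ 6 * π * n / n' := by
      rw [le_div_iff₀ hn'ℝ]; nlinarith [pi_gt_three]

lemma exists_lacunary_scales_covering_jumps (m : ℕ → ℕ) (hpos : ∀ k, 1 ≤ k → 0 < m k)
    (hm : MonotoneOn m (Ici 1)) :
    ∃ q : ℕ → ℕ, 0 < q 0 ∧ (∀ i, 3 * q i < q (i + 1)) ∧
      ∀ k, 1 ≤ k → 3 * m k < m (k + 1) → ∃ i, q i ∣ m k ∧ m (k + 1) ≤ q (i + 1) := by
  set jumps := {k | 1 ≤ k ∧ 3 * m k < m (k + 1)}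
  rcases jumps.finite_or_infinite with hfin | hinf
  · obtain ⟨N, hN⟩ := hfin.bddAbove
    refine ⟨fun i => max 4 (m (N + 1)) ^ i, by positivity, fun i => ?_, fun k hk hjump => ?_⟩
    · have hQ : 4 ≤ max 4 (m (N + 1)) := le_max_left _ _
      have : 0 < max 4 (m (N + 1)) ^ i := by positivity
      simp only [pow_succ]
      nlinarith
    · have hkN : k ≤ N := hN ⟨hk, hjump⟩
      refine ⟨0, one_dvd _, ?_⟩
      simpa using (hm (by simp) (by simp) (by omega : k + 1 ≤ N + 1)).trans (le_max_right 4 _)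
  · set e := Nat.nth (· ∈ jumps)
    have he : ∀ i, e i ∈ jumps := Nat.nth_mem_of_infinite hinf
    refine ⟨m ∘ e, hpos _ (he 0).1, fun i => ?_, fun k hk hjump => ?_⟩
    · exact (he i).2.trans_le (hm (by simp) (he (i + 1)).1 (Nat.nth_strictMono hinf i.lt_succ_self))
    · obtain ⟨i, -, rfl⟩ := Nat.exists_lt_card_nth_eq (p := (· ∈ jumps)) ⟨hk, hjump⟩
      exact ⟨i, dvd_rfl, hm (by simp) (he (i + 1)).1 (Nat.nth_strictMono hinf i.lt_succ_self)⟩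

lemma norm_circleExp_pow_sub_one_le_of_scales {m q : ℕ → ℕ} (hpos : ∀ k, 1 ≤ k → 0 < m k)
    (hcover : ∀ k, 1 ≤ k → 3 * m k < m (k + 1) → ∃ i, q i ∣ m k ∧ m (k + 1) ≤ q (i + 1))
    {θ : ℝ} (hθ : ∀ i, ∃ a : ℤ, |q i * θ - a| ≤ 3 * q i / q (i + 1)) {k : ℕ} (hk : 1 ≤ k) :
    ‖(Circle.exp (2 * π * θ) : ℂ) ^ m k - 1‖ ≤ 6 * π * m k / m (k + 1) := by
  rcases lt_or_ge (3 * m k) (m (k + 1)) with hjump | hflat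
  · obtain ⟨i, ⟨d, hd⟩, hle⟩ := hcover k hk hjump
    obtain ⟨a, ha⟩ := hθ i
    have hm₁ : (0 : ℝ) < m (k + 1) := by exact_mod_cast (by omega : 0 < m (k + 1))
    have hle' : (m (k + 1) : ℝ) ≤ q (i + 1) := by exact_mod_cast hle
    have hmk : (m k : ℝ) = q i * d := by exact_mod_cast hd
    have hfactor : (m k : ℝ) * θ - (d * a : ℤ) = d * (q i * θ - a) := by
      rw [hmk]; push_cast; ring
    have hdist : |m k * θ - (d * a : ℤ)| ≤ 3 * m k / m (k + 1) :=
      calc |m k * θ - (d * a : ℤ)| = d * |q i * θ - a| := by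
            rw [hfactor, abs_mul, Nat.abs_cast]
        _ ≤ d * (3 * q i / q (i + 1)) := mul_le_mul_of_nonneg_left ha (Nat.cast_nonneg d)
        _ = 3 * m k / q (i + 1) := by rw [hmk]; ring
        _ ≤ 3 * m k / m (k + 1) := div_le_div_of_nonneg_left (by positivity) hm₁ hle'
    calc _ ≤ 2 * π * |m k * θ - (d * a : ℤ)| := norm_circleExp_pow_sub_one_le θ (m k) (d * a)
      _ ≤ 2 * π * (3 * m k / m (k + 1)) := by gcongr
      _ = 6 * π * m k / m (k + 1) := by ring
  · exact norm_pow_sub_one_le_of_le_three_mul (Circle.norm_coe _) (hpos (k + 1) (by omega)) hflat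

theorem stmt_2 :
    ∃ M : ℝ, 0 < M ∧
      ∀ m : ℕ → ℕ,
        (∀ k, 1 ≤ k → 0 < m k) →
        (∀ k, 1 ≤ k → 2 * m k < m (k + 1)) →
        ¬ Set.Countable
          {z : ℂ | ‖z‖ = 1 ∧
            ∀ k, 1 ≤ k →
              ‖z ^ m k - 1‖ ≤ M * (m k : ℝ) / (m (k + 1) : ℝ)} := by
  refine ⟨6 * π, by positivity, fun m hpos hgrow hcount => ?_⟩
  obtain ⟨q, hq0, hq, hcover⟩ := exists_lacunary_scales_covering_jumps m hpos
    (monotoneOn_nat_Ici_of_le_succ fun k hk => by have := hgrow k hk; omega)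
  refine not_countable_setOf_abs_mul_sub_intCast_le hq hq0
    (MapsTo.countable_of_injOn ?_ (injOn_circleExp_two_pi_mul.mono (sep_subset _ _)) hcount)
  exact fun θ hθ => ⟨Circle.norm_coe _,
    fun k hk => norm_circleExp_pow_sub_one_le_of_scales hpos hcover hθ.2 hk⟩
end

section
/- There exists a positive constant M such that for any sequence of positive integers (m_k)_{k≥1} with m_{k+1}/m_k > 2 for all k ≥ 1, the set of λ ∈ 𝕋 satisfying |λ^{m_k} - 1| ≤ M · m_k/m_{k+1} for all k ≥ 1 is (6π/m₁)-dense in 𝕋; in particular there exists such a λ with |λ + 1| ≤ 6π/m₁. -/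
/-!
Starting from an angle `θ₀ = t`, round it to the nearest multiple of `2π / n₀`, round the result
to the nearest multiple of `2π / n₁`, and so on. The `k`-th rounding moves the angle by at most `π / nₖ`,
and lacunarity (`2 nₖ ≤ nₖ₊₁`) makes these moves summable: the angles converge to some `θ` with
`|θ - θₖ| ≤ 2π / nₖ`. Since `nₖ θₖ₊₁ ∈ 2πℤ`, this gives `|e^{i nₖ θ} - 1| ≤ nₖ |θ - θₖ₊₁| ≤ 2π nₖ / nₖ₊₁`,
and `k = 0` gives `|θ - t| ≤ 2π / n₀`.
-/

open Complex Real Filter Topology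

lemma norm_exp_ofReal_mul_I_sub_exp_ofReal_mul_I_le (a b : ℝ) :
    ‖exp (a * I) - exp (b * I)‖ ≤ |a - b| := by
  have h : exp (a * I) - exp (b * I) = exp (b * I) * (exp (I * ↑(a - b)) - 1) := by
    rw [mul_sub, mul_one, ← Complex.exp_add]
    push_cast
    ring_nf
  rw [h, norm_mul, norm_exp_ofReal_mul_I, one_mul]
  exact norm_exp_I_mul_ofReal_sub_one_le

noncomputable def roundToMultiple (c x : ℝ) : ℝ := round (x / c) * c

lemma abs_roundToMultiple_sub_le {c : ℝ} (hc : 0 < c) (x : ℝ) :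
    |roundToMultiple c x - x| ≤ c / 2 := by
  have hx : x = x / c * c := by field_simp
  calc |roundToMultiple c x - x| = |x / c - round (x / c)| * c := by
        rw [roundToMultiple, abs_sub_comm, hx, ← sub_mul, abs_mul, abs_of_pos hc, ← hx]
    _ ≤ 1 / 2 * c := by gcongr; exact abs_sub_round _
    _ = c / 2 := by ring

lemma exp_natCast_mul_roundToMultiple_two_pi_div_mul_I {N : ℕ} (hN : N ≠ 0) (x : ℝ) :
    exp (↑(N * roundToMultiple (2 * π / N) x) * I) = 1 := by
  rw [← exp_int_mul_two_pi_mul_I (round (x / (2 * π / N)))]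
  congr 1
  simp only [roundToMultiple]
  push_cast
  field_simp

section Lacunary

variable {n : ℕ → ℕ}

lemma two_pow_mul_le_of_two_mul_le (hgrow : ∀ k, 2 * n k ≤ n (k + 1)) (k j : ℕ) :
    2 ^ j * n k ≤ n (k + j) := by
  induction j with
  | zero => simp
  | succ j ih =>
    calc 2 ^ (j + 1) * n k = 2 * (2 ^ j * n k) := by ring
      _ ≤ 2 * n (k + j) := by gcongr
      _ ≤ n (k + (j + 1)) := hgrow (k + j)

variable {X : Type*} [PseudoMetricSpace X] {b : ℕ → X} {c : ℝ}

lemma dist_add_succ_le_geometric_two (hn : ∀ k, 0 < n k) (hgrow : ∀ k, 2 * n k ≤ n (k + 1))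
    (hb : ∀ k, dist (b k) (b (k + 1)) ≤ c / n k) (k j : ℕ) :
    dist (b (k + j)) (b (k + j + 1)) ≤ 2 * c / n k / 2 / 2 ^ j := by
  have hc : 0 ≤ c := by
    have h0 : (0 : ℝ) < n 0 := by exact_mod_cast hn 0
    simpa [h0.ne'] using mul_nonneg (dist_nonneg.trans (hb 0)) h0.le
  have hle : (2 ^ j * n k : ℝ) ≤ n (k + j) := by
    exact_mod_cast two_pow_mul_le_of_two_mul_le hgrow k j
  calc dist (b (k + j)) (b (k + j + 1)) ≤ c / n (k + j) := hb (k + j)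
    _ ≤ c / (2 ^ j * n k) := by gcongr; exact_mod_cast (mul_pos (by positivity) (hn k))
    _ = 2 * c / n k / 2 / 2 ^ j := by field_simp

lemma dist_le_of_tendsto_of_dist_succ_le (hn : ∀ k, 0 < n k)
    (hgrow : ∀ k, 2 * n k ≤ n (k + 1)) (hb : ∀ k, dist (b k) (b (k + 1)) ≤ c / n k) {θ : X}
    (hθ : Tendsto b atTop (𝓝 θ)) (k : ℕ) :
    dist (b k) θ ≤ 2 * c / n k :=
  dist_le_of_le_geometric_two_of_tendsto₀ (f := fun j => b (k + j))
    (dist_add_succ_le_geometric_two hn hgrow hb k)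
    (hθ.comp ((tendsto_add_atTop_nat k).congr fun j => add_comm j k))

noncomputable def successiveRounding (n : ℕ → ℕ) (t : ℝ) : ℕ → ℝ
  | 0 => t
  | k + 1 => roundToMultiple (2 * π / n k) (successiveRounding n t k)

lemma dist_successiveRounding_succ_le (hn : ∀ k, 0 < n k) (t : ℝ) (k : ℕ) :
    dist (successiveRounding n t k) (successiveRounding n t (k + 1)) ≤ π / n k := by
  have hk : (0 : ℝ) < n k := by exact_mod_cast hn k
  rw [dist_comm, Real.dist_eq]
  calc |roundToMultiple (2 * π / n k) (successiveRounding n t k) - successiveRounding n t k|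
      ≤ 2 * π / n k / 2 := abs_roundToMultiple_sub_le (by positivity) _
    _ = π / n k := by ring

theorem exists_norm_sub_le_and_norm_pow_sub_one_le (hn : ∀ k, 0 < n k)
    (hgrow : ∀ k, 2 * n k ≤ n (k + 1)) {w : ℂ} (hw : ‖w‖ = 1) :
    ∃ z : ℂ, ‖z‖ = 1 ∧ ‖z - w‖ ≤ 2 * π / n 0 ∧
      ∀ k, ‖z ^ n k - 1‖ ≤ 2 * π * n k / n (k + 1) := by
  set b := successiveRounding n (arg w)
  have hb := dist_successiveRounding_succ_le hn (arg w)
  obtain ⟨θ, hθ⟩ := cauchySeq_tendsto_of_complete <|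
    cauchySeq_of_le_geometric_two (by simpa using dist_add_succ_le_geometric_two hn hgrow hb 0)
  have hdist := dist_le_of_tendsto_of_dist_succ_le hn hgrow hb hθ
  refine ⟨exp (θ * I), norm_exp_ofReal_mul_I θ, ?_, fun k => ?_⟩
  · conv_lhs => rw [← norm_mul_exp_arg_mul_I w, hw, ofReal_one, one_mul]
    calc ‖exp (θ * I) - exp (arg w * I)‖ ≤ |θ - arg w| :=
          norm_exp_ofReal_mul_I_sub_exp_ofReal_mul_I_le _ _
      _ ≤ 2 * π / n 0 := by rw [abs_sub_comm, ← Real.dist_eq]; exact hdist 0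
  · have hpow : exp (θ * I) ^ n k = exp (↑(n k * θ) * I) := by
      rw [← Complex.exp_nat_mul]; push_cast; ring_nf
    calc ‖exp (θ * I) ^ n k - 1‖
        = ‖exp (↑(n k * θ) * I) - exp (↑(n k * b (k + 1)) * I)‖ := by
          rw [hpow, show b (k + 1) = roundToMultiple (2 * π / n k) (b k) from rfl,
            exp_natCast_mul_roundToMultiple_two_pi_div_mul_I (hn k).ne']
      _ ≤ |n k * θ - n k * b (k + 1)| := norm_exp_ofReal_mul_I_sub_exp_ofReal_mul_I_le _ _
      _ = n k * dist (b (k + 1)) θ := by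
          rw [← mul_sub, abs_mul, Nat.abs_cast, abs_sub_comm, Real.dist_eq]
      _ ≤ n k * (2 * π / n (k + 1)) := by gcongr; exact hdist (k + 1)
      _ = 2 * π * n k / n (k + 1) := by ring

end Lacunary

theorem stmt_3 :
    ∃ M : ℝ, 0 < M ∧
      ∀ m : ℕ → ℕ,
        (∀ k, 1 ≤ k → 0 < m k) →
        (∀ k, 1 ≤ k → 2 * m k < m (k + 1)) →
        (∀ w : ℂ, ‖w‖ = 1 →
          ∃ z : ℂ, ‖z‖ = 1 ∧
            (∀ k, 1 ≤ k →
              ‖z ^ m k - 1‖ ≤ M * (m k : ℝ) / (m (k + 1) : ℝ)) ∧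
            ‖z - w‖ ≤ 6 * Real.pi / (m 1 : ℝ)) ∧
        (∃ z : ℂ, ‖z‖ = 1 ∧
          (∀ k, 1 ≤ k →
            ‖z ^ m k - 1‖ ≤ M * (m k : ℝ) / (m (k + 1) : ℝ)) ∧
          ‖z + 1‖ ≤ 6 * Real.pi / (m 1 : ℝ)) := by
  refine ⟨2 * π, by positivity, fun m hpos hgrow => ?_⟩
  have hdense : ∀ w : ℂ, ‖w‖ = 1 → ∃ z : ℂ, ‖z‖ = 1 ∧
      (∀ k, 1 ≤ k → ‖z ^ m k - 1‖ ≤ 2 * π * (m k : ℝ) / (m (k + 1) : ℝ)) ∧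
      ‖z - w‖ ≤ 6 * π / (m 1 : ℝ) := by
    intro w hw
    obtain ⟨z, hz, hzw, hpow⟩ := exists_norm_sub_le_and_norm_pow_sub_one_le
      (n := fun k => m (k + 1)) (fun k => hpos (k + 1) (by omega))
      (fun k => (hgrow (k + 1) (by omega)).le) hw
    refine ⟨z, hz, fun k hk => ?_, hzw.trans ?_⟩
    · obtain ⟨k, rfl⟩ := Nat.exists_eq_add_of_le' hk
      exact hpow k
    · gcongr; linarith
  refine ⟨hdense, ?_⟩
  obtain ⟨z, hz, hpow, hz1⟩ := hdense (-1) (by simp)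
  exact ⟨z, hz, hpow, by rwa [sub_neg_eq_add] at hz1⟩
end

section
/- If (θ₁, ..., θ_{r+1}) are real numbers which are rationally independent together with 1, then for every δ ∈ (0,1) the set D = {n ≥ 0 : min_{1≤j≤r+1} {nθ_j - 1/2} < δ/(2π)} contains, for some q ≥ 1, the integers q, 2q, ..., (r+1)q; consequently D is a Poincaré set when applied with the tuple (θ₁, 2θ₂, ..., (r+1)θ_{r+1}). -/
/-!
Kronecker's theorem via Weyl equidistribution. If no nontrivial character of the torus
`𝕋 = (ℝ/ℤ)^ι` takes the value `1` at `t`, the Birkhoff averages of a continuous function along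
`x, x + t, x + 2t, …` converge to its Haar integral: for a character this is a geometric sum, and
the general case follows because trigonometric polynomials are dense (Stone–Weierstrass) and the
averages are `1`-Lipschitz in the function. Applied to a bump function around `c`, the orbit
`{k • t : k ≥ 1}` must come close to `c`. Taking `t = (θ_j)` and `c_j = 1 / (2(j+1))`, a `q` with
`q θ_j ≈ c_j` for all `j` makes `(j+1) q θ_j ≈ 1/2` for all `j` simultaneously.
-/

open Filter Topology MeasureTheory Finset UnitAddTorus

instance UnitAddCircle.isProbabilityMeasure_volume :
    IsProbabilityMeasure (volume : Measure UnitAddCircle) :=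
  ⟨by simp [AddCircle.measure_univ]⟩

theorem AddCircle.integral_fourier_of_ne_zero {T : ℝ} [hT : Fact (0 < T)] {n : ℤ} (hn : n ≠ 0) :
    ∫ x : AddCircle T, fourier n x = 0 := by
  have h := integral_add_right_eq_self (μ := volume) (fun x => fourier n x)
    ((T / 2 / n : ℝ) : AddCircle T)
  simp only [fourier_add_half_inv_index hn hT.out, integral_neg] at h
  linear_combination -h / 2

theorem ContinuousMap.integrable {X E : Type*} [TopologicalSpace X] [CompactSpace X]
    [MeasurableSpace X] [OpensMeasurableSpace X] [NormedAddCommGroup E] {μ : Measure X}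
    [IsFiniteMeasure μ] (g : C(X, E)) : Integrable g μ :=
  g.continuous.integrable_of_hasCompactSupport (.of_compactSpace _)

theorem ContinuousMap.lipschitzWith_integral {X E : Type*} [TopologicalSpace X] [CompactSpace X]
    [MeasurableSpace X] [OpensMeasurableSpace X] [NormedAddCommGroup E] [NormedSpace ℝ E]
    (μ : Measure X) [IsProbabilityMeasure μ] :
    LipschitzWith 1 fun g : C(X, E) => ∫ x, g x ∂μ := by
  refine LipschitzWith.of_dist_le_mul fun g h => ?_
  rw [dist_eq_norm, ← integral_sub g.integrable h.integrable, NNReal.coe_one, one_mul,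
    dist_eq_norm]
  simpa using norm_integral_le_of_norm_le_const (μ := μ)
    (.of_forall fun x => (g - h).norm_coe_le_norm x)

theorem norm_birkhoffAverage_le (𝕜 : Type*) [RCLike 𝕜] {α E : Type*} [NormedAddCommGroup E]
    [NormedSpace 𝕜 E] (f : α → α) {g : α → E} {C : ℝ} (hC : 0 ≤ C) (hg : ∀ x, ‖g x‖ ≤ C)
    (N : ℕ) (x : α) : ‖birkhoffAverage 𝕜 f g N x‖ ≤ C := by
  rcases eq_or_ne N 0 with rfl | hN
  · simpa using hC
  calc ‖birkhoffAverage 𝕜 f g N x‖ ≤ (N : ℝ)⁻¹ * ∑ k ∈ range N, ‖g (f^[k] x)‖ := by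
        rw [birkhoffAverage, birkhoffSum, norm_smul, norm_inv, RCLike.norm_natCast]
        gcongr
        exact norm_sum_le _ _
    _ ≤ (N : ℝ)⁻¹ * (N * C) := by
        gcongr
        simpa using sum_le_card_nsmul (range N) _ C fun k _ => hg _
    _ = C := by field_simp

theorem lipschitzWith_birkhoffAverage_apply (𝕜 : Type*) [RCLike 𝕜] {X E : Type*}
    [TopologicalSpace X] [CompactSpace X] [NormedAddCommGroup E] [NormedSpace 𝕜 E] (f : X → X)
    (N : ℕ) (x : X) : LipschitzWith 1 fun g : C(X, E) => birkhoffAverage 𝕜 f g N x := by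
  refine LipschitzWith.of_dist_le_mul fun g h => ?_
  have := norm_birkhoffAverage_le 𝕜 f (norm_nonneg _) (g - h).norm_coe_le_norm N x
  rwa [ContinuousMap.coe_sub, birkhoffAverage_sub, Pi.sub_apply, Pi.sub_apply, ← dist_eq_norm,
    ← dist_eq_norm, ← one_mul (dist g h), ← NNReal.coe_one] at this

theorem tendsto_inv_mul_geom_sum_of_norm_eq_one {w : ℂ} (hw : ‖w‖ = 1) (hw1 : w ≠ 1) :
    Tendsto (fun N : ℕ => (N : ℂ)⁻¹ * ∑ k ∈ range N, w ^ k) atTop (𝓝 0) := by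
  have hsum (N : ℕ) : ‖∑ k ∈ range N, w ^ k‖ ≤ 2 / ‖w - 1‖ := by
    rw [geom_sum_eq hw1, norm_div]
    gcongr
    calc ‖w ^ N - 1‖ ≤ ‖w ^ N‖ + ‖(1 : ℂ)‖ := norm_sub_le _ _
      _ = 2 := by rw [norm_pow, hw]; norm_num
  refine squeeze_zero_norm (fun N => ?_)
    (by simpa using (tendsto_inv_atTop_nhds_zero_nat (𝕜 := ℝ)).mul_const (2 / ‖w - 1‖))
  rw [norm_mul, norm_inv, Complex.norm_natCast]
  exact mul_le_mul_of_nonneg_left (hsum N) (by positivity)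

theorem AddCircle.norm_coe_natCast_mul_le {p : ℝ} (m : ℕ) (x : ℝ) :
    ‖((m * x : ℝ) : AddCircle p)‖ ≤ m * ‖(x : AddCircle p)‖ := by
  rw [← nsmul_eq_mul, AddCircle.coe_nsmul]
  exact norm_nsmul_le

namespace UnitAddTorus

variable {ι : Type*} [Fintype ι]

theorem mFourier_apply_add (n : ι → ℤ) (x y : UnitAddTorus ι) :
    mFourier n (x + y) = mFourier n x * mFourier n y := by
  simp only [mFourier, ContinuousMap.coe_mk, Pi.add_apply, fourier_apply, smul_add,
    AddCircle.toCircle_add, Circle.coe_mul, prod_mul_distrib]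

theorem mFourier_apply_nsmul (n : ι → ℤ) (k : ℕ) (x : UnitAddTorus ι) :
    mFourier n (k • x) = mFourier n x ^ k := by
  induction k with
  | zero => simp [mFourier]
  | succ k ih => rw [succ_nsmul, mFourier_apply_add, ih, pow_succ]

theorem norm_mFourier_apply (n : ι → ℤ) (x : UnitAddTorus ι) : ‖mFourier n x‖ = 1 := by
  simp [mFourier, Circle.norm_coe]

theorem integral_mFourier (n : ι → ℤ) : ∫ x, mFourier n x = if n = 0 then 1 else 0 := by
  split_ifs with hn
  · simp [hn, mFourier_zero]
  obtain ⟨i, hi⟩ := Function.ne_iff.mp hn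
  simp only [mFourier, ContinuousMap.coe_mk]
  rw [integral_fintype_prod_volume_eq_prod]
  exact prod_eq_zero (mem_univ i) (AddCircle.integral_fourier_of_ne_zero hi)

theorem mFourier_coe_eq_one_iff (n : ι → ℤ) (θ : ι → ℝ) :
    mFourier n (fun i => (θ i : UnitAddCircle)) = 1 ↔ ∃ m : ℤ, ∑ i, n i * θ i = m := by
  simp only [mFourier, ContinuousMap.coe_mk, fourier_coe_apply, ← Complex.exp_sum,
    Complex.exp_eq_one_iff]
  refine exists_congr fun m => ?_
  have hsum : ∑ i, 2 * (Real.pi : ℂ) * Complex.I * (n i : ℤ) * (θ i : ℂ) / ((1 : ℝ) : ℂ)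
      = ((∑ i, n i * θ i : ℝ) : ℂ) * (2 * Real.pi * Complex.I) := by
    push_cast
    rw [sum_mul]
    exact sum_congr rfl fun i _ => by ring
  rw [hsum, mul_left_inj' Complex.two_pi_I_ne_zero, ← Complex.ofReal_intCast, Complex.ofReal_inj]

theorem birkhoffAverage_add_mFourier (n : ι → ℤ) (t x : UnitAddTorus ι) (N : ℕ) :
    birkhoffAverage ℂ (· + t) (mFourier n) N x
      = mFourier n x * ((N : ℂ)⁻¹ * ∑ k ∈ range N, mFourier n t ^ k) := by
  simp only [birkhoffAverage, birkhoffSum, add_right_iterate_apply, mFourier_apply_add,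
    mFourier_apply_nsmul, smul_eq_mul, ← mul_sum]
  ring

variable {t : UnitAddTorus ι}

theorem tendsto_birkhoffAverage_mFourier (ht : ∀ n ≠ 0, mFourier n t ≠ 1) (n : ι → ℤ)
    (x : UnitAddTorus ι) :
    Tendsto (birkhoffAverage ℂ (· + t) (mFourier n) · x) atTop (𝓝 (∫ y, mFourier n y)) := by
  simp only [birkhoffAverage_add_mFourier, integral_mFourier]
  split_ifs with hn
  · subst hn
    refine tendsto_const_nhds.congr' ((eventually_ne_atTop 0).mono fun N hN => ?_)
    simp [mFourier_zero, hN]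
  · simpa using (tendsto_inv_mul_geom_sum_of_norm_eq_one (norm_mFourier_apply n t)
      (ht n hn)).const_mul (mFourier n x)

theorem tendsto_birkhoffAverage_integral (ht : ∀ n ≠ 0, mFourier n t ≠ 1)
    (g : C(UnitAddTorus ι, ℂ)) (x : UnitAddTorus ι) :
    Tendsto (birkhoffAverage ℂ (· + t) g · x) atTop (𝓝 (∫ y, g y)) := by
  set S := {g : C(UnitAddTorus ι, ℂ) |
    Tendsto (birkhoffAverage ℂ (· + t) g · x) atTop (𝓝 (∫ y, g y))}
  have hS : IsClosed S := by
    refine Equicontinuous.isClosed_setOfPred_tendsto ?_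
      (ContinuousMap.lipschitzWith_integral volume).continuous
    exact (LipschitzWith.uniformEquicontinuous _ 1
      (lipschitzWith_birkhoffAverage_apply ℂ (· + t) · x)).equicontinuous
  have hspan : (Submodule.span ℂ (Set.range (mFourier (d := ι))) : Set _) ⊆ S := by
    intro g hg
    induction hg using Submodule.span_induction with
    | mem g hg =>
      obtain ⟨n, rfl⟩ := hg
      exact tendsto_birkhoffAverage_mFourier ht n x
    | zero => simp [S, birkhoffAverage, birkhoffSum]
    | add g h _ _ hg hh =>
      simpa only [S, Set.mem_ofPred_eq, ContinuousMap.coe_add, birkhoffAverage_add, Pi.add_apply,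
        integral_add g.integrable h.integrable] using hg.add hh
    | smul c g _ hg =>
      simpa only [S, Set.mem_ofPred_eq, ContinuousMap.coe_smul, Pi.smul_apply, smul_eq_mul,
        birkhoffAverage, birkhoffSum, integral_const_mul, mul_sum, mul_left_comm _ c] using
        hg.const_mul c
  have hdense : Dense (Submodule.span ℂ (Set.range (mFourier (d := ι))) :
      Set C(UnitAddTorus ι, ℂ)) :=
    Submodule.dense_iff_topologicalClosure_eq_top.mpr span_mFourier_closure_eq_top
  exact hS.closure_subset_iff.mpr hspan (hdense g)

theorem exists_pos_nsmul_dist_lt (ht : ∀ n ≠ 0, mFourier n t ≠ 1) (c : UnitAddTorus ι) {ε : ℝ}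
    (hε : 0 < ε) : ∃ k : ℕ, 0 < k ∧ dist (k • t) c < ε := by
  by_contra! hfar
  set bump : UnitAddTorus ι → ℝ := fun y => max (ε - dist y c) 0
  have hbump : Continuous bump := by fun_prop
  have hpos : 0 < ∫ y, bump y :=
    hbump.integral_pos_of_hasCompactSupport_nonneg_nonzero (.of_compactSpace _)
      (fun y => le_max_right _ _) (x := c) (by simp [bump, hε])
  have horbit (k : ℕ) : bump (t + k • t) = 0 := by
    rw [← succ_nsmul']
    exact max_eq_right (by linarith [hfar (k + 1) k.succ_pos])
  let g : C(UnitAddTorus ι, ℂ) := ⟨fun y => bump y, by fun_prop⟩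
  have hg : (birkhoffAverage ℂ (· + t) g · t) = 0 := by
    funext N
    simp [birkhoffAverage, birkhoffSum, add_right_iterate_apply, g, horbit]
  have hlim := tendsto_birkhoffAverage_integral ht g t
  rw [hg] at hlim
  have hint : ∫ y, g y = ((∫ y, bump y : ℝ) : ℂ) := integral_ofReal
  have hzero : ∫ y, g y = 0 := tendsto_nhds_unique hlim tendsto_const_nhds
  exact hpos.ne' (Complex.ofReal_eq_zero.mp (hint.symm.trans hzero))

end UnitAddTorus

theorem stmt_6_general (r : ℕ) (θ : Fin (r + 1) → ℝ)
    (hindep : ∀ (a : Fin (r + 1) → ℤ) (a₀ : ℤ),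
      (∑ j, (a j : ℝ) * θ j) + (a₀ : ℝ) = 0 → (∀ j, a j = 0) ∧ a₀ = 0)
    (δ : ℝ) (hδ : 0 < δ) :
    ∃ q : ℕ, 1 ≤ q ∧
      ∀ i : Fin (r + 1),
        ∃ j : Fin (r + 1),
          |((((i : ℕ) + 1) * q : ℕ) : ℝ) * θ j - 1/2 -
            (round ((((i : ℕ) + 1) * q : ℕ) * θ j - 1/2) : ℝ)| < δ / (2 * Real.pi) := by
  set t : UnitAddTorus (Fin (r + 1)) := fun j => (θ j : UnitAddCircle)
  set c : Fin (r + 1) → ℝ := fun j => 1 / (2 * ((j : ℕ) + 1))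
  have ht : ∀ n ≠ 0, mFourier n t ≠ 1 := fun n hn h1 => by
    obtain ⟨m, hm⟩ := (mFourier_coe_eq_one_iff n θ).mp h1
    exact hn (funext (hindep n (-m) (by push_cast; linarith)).1)
  obtain ⟨q, hq, hclose⟩ := exists_pos_nsmul_dist_lt ht (fun j => (c j : UnitAddCircle))
    (ε := δ / (2 * Real.pi * (r + 1))) (by positivity)
  refine ⟨q, hq, fun i => ⟨i, ?_⟩⟩
  have hi : ((i : ℕ) + 1 : ℝ) ≤ r + 1 := by exact_mod_cast i.is_lt
  have hscale : ((((i : ℕ) + 1) * q : ℕ) : ℝ) * θ i - 1 / 2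
      = (((i : ℕ) + 1 : ℕ) : ℝ) * (q * θ i - c i) := by
    simp only [c]
    push_cast
    field_simp
  have hcoord : ‖((q * θ i - c i : ℝ) : UnitAddCircle)‖
      ≤ dist (q • t) (fun j => (c j : UnitAddCircle)) := by
    simpa [t, dist_eq_norm, AddCircle.coe_nsmul, AddCircle.coe_sub] using
      dist_le_pi_dist (q • t) (fun j => (c j : UnitAddCircle)) i
  rw [← UnitAddCircle.norm_eq, hscale]
  calc _ ≤ (((i : ℕ) + 1 : ℕ) : ℝ) * ‖((q * θ i - c i : ℝ) : UnitAddCircle)‖ :=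
        AddCircle.norm_coe_natCast_mul_le _ _
    _ < (r + 1) * (δ / (2 * Real.pi * (r + 1))) := by
        push_cast
        exact mul_lt_mul' hi (hcoord.trans_lt hclose) (norm_nonneg _) (by positivity)
    _ = δ / (2 * Real.pi) := by field_simp

theorem stmt_6 (r : ℕ) (hr : 1 ≤ r) (θ : Fin (r + 1) → ℝ)
    (hindep : ∀ (a : Fin (r + 1) → ℤ) (a₀ : ℤ),
      (∑ j, (a j : ℝ) * θ j) + (a₀ : ℝ) = 0 → (∀ j, a j = 0) ∧ a₀ = 0)
    (δ : ℝ) (hδ : 0 < δ) (hδ1 : δ < 1) :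
    ∃ q : ℕ, 1 ≤ q ∧
      ∀ i : Fin (r + 1),
        ∃ j : Fin (r + 1),
          |((((i : ℕ) + 1) * q : ℕ) : ℝ) * θ j - 1/2 -
            (round ((((i : ℕ) + 1) * q : ℕ) * θ j - 1/2) : ℝ)| < δ / (2 * Real.pi) :=
  stmt_6_general r θ hindep δ hδ
end

section
/- Let (H_N)_{N≥1} and (Θ_N)_{N≥1} be sequences of positive integers with H₁ ≥ 6π and such that 2M·Θ_N·H_N/H_{N+1} ≤ 2^{-N} for all N (where M is the constant from the Cantor-set lemma). Then there exists μ ∈ 𝕋 with |μ + 1| ≤ 6π/H₁ such that |μ^{H_N j + 1} - 1| ≥ 2 - 6π/H₁ - 2^{-N} for all N ≥ 1 and all 1 ≤ j ≤ Θ_N; in particular if the right-hand side exceeds 1/2, the set ⋃_N {H_N j + 1 : 1 ≤ j ≤ Θ_N} is not a recurrence set for the rotation by μ. -/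
/-!
Feeding the sequence `H` itself to the Cantor-set lemma gives `μ` close to `-1` with
`‖μ ^ H N - 1‖ ≤ M H_N / H_{N+1}`. Then `μ ^ (H_N j)` stays within
`Θ_N M H_N / H_{N+1} ≤ 2^{-N}` of `1` for `j ≤ Θ_N`, so `μ ^ (H_N j + 1)` is almost `μ`,
which is far from `1`.

The growth `H_{N+1} > 2 H_N` that the lemma requires follows from the growth hypothesis because
every admissible constant has `M > 1`: applied to `m_{k+1} = 3 m_k + 1`, the lemma would put
`λ = λ^{m_2} / (λ^{m_1})^3` close to both `1` and `-1`.
-/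

open Real

def IsCantorConstant (M : ℝ) : Prop :=
  ∀ m : ℕ → ℕ, (∀ k, 1 ≤ k → 0 < m k) → (∀ k, 1 ≤ k → 2 * m k < m (k + 1)) →
    ∃ lam : ℂ, ‖lam‖ = 1 ∧ ‖lam + 1‖ ≤ 6 * π / (m 1 : ℝ) ∧
      ∀ k, 1 ≤ k → ‖lam ^ m k - 1‖ ≤ M * (m k : ℝ) / (m (k + 1) : ℝ)

section NormedRing

variable {R : Type*} [SeminormedRing R] [NormOneClass R]

lemma norm_pow_sub_one_le {z : R} (hz : ‖z‖ ≤ 1) (n : ℕ) :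
    ‖z ^ n - 1‖ ≤ n * ‖z - 1‖ := by
  induction n with
  | zero => simp
  | succ k ih =>
    have hzk : ‖z ^ k‖ ≤ 1 := (norm_pow_le z k).trans (pow_le_one₀ (norm_nonneg z) hz)
    calc ‖z ^ (k + 1) - 1‖ = ‖z ^ k * (z - 1) + (z ^ k - 1)‖ := by
          rw [pow_succ, mul_sub, mul_one, sub_add_sub_cancel]
      _ ≤ ‖z ^ k‖ * ‖z - 1‖ + ‖z ^ k - 1‖ :=
          (norm_add_le _ _).trans (by gcongr; exact norm_mul_le _ _)
      _ ≤ 1 * ‖z - 1‖ + k * ‖z - 1‖ := by gcongr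
      _ = (k + 1 : ℕ) * ‖z - 1‖ := by push_cast; ring

end NormedRing

lemma norm_sub_one_le_norm_pow_succ_sub_one_add {𝕜 : Type*} [NormedDivisionRing 𝕜] {z : 𝕜}
    (hz : ‖z‖ = 1) (n : ℕ) : ‖z - 1‖ ≤ ‖z ^ (n + 1) - 1‖ + ‖z ^ n - 1‖ :=
  calc ‖z - 1‖ = ‖z ^ n * (z - 1)‖ := by rw [norm_mul, norm_pow, hz, one_pow, one_mul]
    _ = ‖(z ^ (n + 1) - 1) - (z ^ n - 1)‖ := by
        rw [pow_succ, mul_sub, mul_one, sub_sub_sub_cancel_right]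
    _ ≤ ‖z ^ (n + 1) - 1‖ + ‖z ^ n - 1‖ := norm_sub_le _ _

lemma two_le_norm_sub_one_add_norm_add_one (z : ℂ) : 2 ≤ ‖z - 1‖ + ‖z + 1‖ :=
  calc (2 : ℝ) = ‖(z + 1) - (z - 1)‖ := by rw [add_sub_sub_cancel]; norm_num
    _ ≤ ‖z - 1‖ + ‖z + 1‖ := (norm_sub_le _ _).trans_eq (add_comm _ _)

lemma two_sub_le_norm_pow_mul_add_one_sub_one {μ : ℂ} (hμ : ‖μ‖ = 1) (h j : ℕ) :
    2 - ‖μ + 1‖ - j * ‖μ ^ h - 1‖ ≤ ‖μ ^ (h * j + 1) - 1‖ := by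
  have hpow : ‖μ ^ (h * j) - 1‖ ≤ j * ‖μ ^ h - 1‖ := by
    rw [pow_mul]
    exact norm_pow_sub_one_le (by rw [norm_pow, hμ, one_pow]) j
  linarith [two_le_norm_sub_one_add_norm_add_one μ,
    norm_sub_one_le_norm_pow_succ_sub_one_add hμ (h * j)]

-- `40, 121, 364, 1093, …`: starting at `40` makes `6π / m₁` small.
def tripleAddOneSeq : ℕ → ℕ
  | 0 => 40
  | k + 1 => 3 * tripleAddOneSeq k + 1

lemma IsCantorConstant.one_lt {M : ℝ} (hM : IsCantorConstant M) : 1 < M := by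
  obtain ⟨l, hl, hl_neg, hl_pow⟩ :=
    hM tripleAddOneSeq (fun k _ => by cases k <;> simp [tripleAddOneSeq])
      (fun k _ => by simp only [tripleAddOneSeq]; omega)
  have h₁ : ‖l ^ 121 - 1‖ ≤ M * (121 : ℕ) / (364 : ℕ) := hl_pow 1 le_rfl
  have h₂ : ‖l ^ 364 - 1‖ ≤ M * (364 : ℕ) / (1093 : ℕ) := hl_pow 2 one_le_two
  have h_neg : ‖l + 1‖ ≤ 6 * π / (121 : ℕ) := hl_neg
  push_cast at h₁ h₂ h_neg
  have h_cube : ‖l ^ 363 - 1‖ ≤ 3 * ‖l ^ 121 - 1‖ := by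
    have h := norm_pow_sub_one_le (z := l ^ 121) (by rw [norm_pow, hl, one_pow]) 3
    rwa [← pow_mul, Nat.cast_ofNat] at h
  have h_one : ‖l - 1‖ ≤ ‖l ^ 364 - 1‖ + ‖l ^ 363 - 1‖ :=
    norm_sub_one_le_norm_pow_succ_sub_one_add hl 363
  linarith [two_le_norm_sub_one_add_norm_add_one l, pi_lt_four]

lemma two_zpow_neg_le_half {N : ℕ} (hN : 1 ≤ N) : (2 : ℝ) ^ (-(N : ℤ)) ≤ 1 / 2 := by
  have hN' : -(N : ℤ) ≤ -1 := by omega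
  simpa using zpow_le_zpow_right₀ (one_le_two : (1 : ℝ) ≤ 2) hN'

lemma two_mul_lt_of_mul_div_le_half {M θ a b : ℝ} (hM : 1 < M) (hθ : 1 ≤ θ) (ha : 0 < a)
    (hb : 0 < b) (h : 2 * M * θ * a / b ≤ 1 / 2) : 2 * a < b := by
  have hMθ : 1 < M * θ := by nlinarith
  have hlt : a < M * θ * a := by nlinarith
  linarith [(div_le_iff₀ hb).mp h]

theorem stmt_12_general (M : ℝ)
    (hCantor : ∀ m : ℕ → ℕ, (∀ k, 1 ≤ k → 0 < m k) →
      (∀ k, 1 ≤ k → 2 * m k < m (k + 1)) →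
      ∃ lam : ℂ, ‖lam‖ = 1 ∧
        ‖lam + 1‖ ≤ 6 * Real.pi / (m 1 : ℝ) ∧
        ∀ k, 1 ≤ k → ‖lam ^ m k - 1‖ ≤ M * (m k : ℝ) / (m (k + 1) : ℝ))
    (H Θ : ℕ → ℕ) (hH : ∀ N, 0 < H N) (hΘ : ∀ N, 0 < Θ N)
    (hgrowth : ∀ N, 1 ≤ N →
      2 * M * (Θ N : ℝ) * (H N : ℝ) / (H (N + 1) : ℝ) ≤ (2 : ℝ) ^ (-(N : ℤ))) :
    ∃ μ : ℂ, ‖μ‖ = 1 ∧ ‖μ + 1‖ ≤ 6 * Real.pi / (H 1 : ℝ) ∧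
      (∀ N, 1 ≤ N → ∀ j, 1 ≤ j → j ≤ Θ N →
        2 - 6 * Real.pi / (H 1 : ℝ) - (2 : ℝ) ^ (-(N : ℤ)) ≤
          ‖μ ^ (H N * j + 1) - 1‖) ∧
      ((∀ N, 1 ≤ N → (1 : ℝ) / 2 < 2 - 6 * Real.pi / (H 1 : ℝ) - (2 : ℝ) ^ (-(N : ℤ))) →
        ¬ ∀ δ : ℝ, 0 < δ →
          ∃ n ∈ ⋃ N ∈ {N : ℕ | 1 ≤ N}, {n : ℕ | ∃ j, 1 ≤ j ∧ j ≤ Θ N ∧ n = H N * j + 1},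
            ‖μ ^ n - 1‖ < δ) := by
  have hM : 1 < M := IsCantorConstant.one_lt hCantor
  have hH_growth : ∀ N, 1 ≤ N → 2 * H N < H (N + 1) := fun N hN => by
    exact_mod_cast two_mul_lt_of_mul_div_le_half hM (by exact_mod_cast hΘ N)
      (by exact_mod_cast hH N) (by exact_mod_cast hH (N + 1))
      ((hgrowth N hN).trans (two_zpow_neg_le_half hN))
  obtain ⟨μ, hμ, hμ_neg, hμ_pow⟩ := hCantor H (fun k _ => hH k) hH_growth
  have key : ∀ N, 1 ≤ N → ∀ j, 1 ≤ j → j ≤ Θ N →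
      2 - 6 * π / (H 1 : ℝ) - (2 : ℝ) ^ (-(N : ℤ)) ≤ ‖μ ^ (H N * j + 1) - 1‖ := by
    intro N hN j _ hj
    have hj' : (j : ℝ) ≤ Θ N := by exact_mod_cast hj
    have hsmall : (j : ℝ) * ‖μ ^ H N - 1‖ ≤ (2 : ℝ) ^ (-(N : ℤ)) :=
      calc (j : ℝ) * ‖μ ^ H N - 1‖ ≤ Θ N * (M * H N / H (N + 1)) :=
            mul_le_mul hj' (hμ_pow N hN) (norm_nonneg _) (Nat.cast_nonneg _)
        _ = (2 * M * Θ N * H N / H (N + 1)) / 2 := by ring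
        _ ≤ (2 : ℝ) ^ (-(N : ℤ)) := by
            linarith [hgrowth N hN, zpow_pos (two_pos : (0 : ℝ) < 2) (-(N : ℤ))]
    linarith [two_sub_le_norm_pow_mul_add_one_sub_one hμ (H N) j]
  refine ⟨μ, hμ, hμ_neg, key, fun hhalf hrec => ?_⟩
  obtain ⟨n, hn, hlt⟩ := hrec (1 / 2) one_half_pos
  simp only [Set.mem_iUnion, Set.mem_ofPred_eq] at hn
  obtain ⟨N, hN, j, hj₁, hj₂, rfl⟩ := hn
  linarith [key N hN j hj₁ hj₂, hhalf N (by exact_mod_cast hN)]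

theorem stmt_12 (M : ℝ) (hM : 0 < M)
    (hCantor : ∀ m : ℕ → ℕ, (∀ k, 1 ≤ k → 0 < m k) →
      (∀ k, 1 ≤ k → 2 * m k < m (k + 1)) →
      ∃ lam : ℂ, ‖lam‖ = 1 ∧
        ‖lam + 1‖ ≤ 6 * Real.pi / (m 1 : ℝ) ∧
        ∀ k, 1 ≤ k → ‖lam ^ m k - 1‖ ≤ M * (m k : ℝ) / (m (k + 1) : ℝ))
    (H Θ : ℕ → ℕ) (hH : ∀ N, 0 < H N) (hΘ : ∀ N, 0 < Θ N)
    (hH1 : 6 * Real.pi ≤ (H 1 : ℝ))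
    (hgrowth : ∀ N, 1 ≤ N →
      2 * M * (Θ N : ℝ) * (H N : ℝ) / (H (N + 1) : ℝ) ≤ (2 : ℝ) ^ (-(N : ℤ))) :
    ∃ μ : ℂ, ‖μ‖ = 1 ∧ ‖μ + 1‖ ≤ 6 * Real.pi / (H 1 : ℝ) ∧
      (∀ N, 1 ≤ N → ∀ j, 1 ≤ j → j ≤ Θ N →
        2 - 6 * Real.pi / (H 1 : ℝ) - (2 : ℝ) ^ (-(N : ℤ)) ≤
          ‖μ ^ (H N * j + 1) - 1‖) ∧
      ((∀ N, 1 ≤ N → (1 : ℝ) / 2 < 2 - 6 * Real.pi / (H 1 : ℝ) - (2 : ℝ) ^ (-(N : ℤ))) →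
        ¬ ∀ δ : ℝ, 0 < δ →
          ∃ n ∈ ⋃ N ∈ {N : ℕ | 1 ≤ N}, {n : ℕ | ∃ j, 1 ≤ j ∧ j ≤ Θ N ∧ n = H N * j + 1},
            ‖μ ^ n - 1‖ < δ) :=
  stmt_12_general M hCantor H Θ hH hΘ hgrowth
end

section
/- If a set S ⊆ ℕ is not a topological recurrence set (Birkhoff set), witnessed by a minimal compact system (X, d, f) and ε > 0 with d(f^n(x), x) ≥ ε for all n ∈ S and x ∈ X, and m is an f-invariant Borel probability measure of full support on X, then there exists a nonempty open U ⊆ X with m(U) > 0 and m(f^{-n}U ∩ U) = 0 for all n ∈ S; hence S is not a Poincaré set. -/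
/-!
If every point moves by at least `ε` under `g`, then no point of a ball of radius `ε / 2` is
mapped back into that ball. Taking `g = f^[n]` for `n ∈ S`, the open ball `U` of radius `ε / 2`
satisfies `f^[n] ⁻¹' U ∩ U = ∅`, while `m U > 0` by full support; so `(X, m, f)` is a
measure-preserving system in which `U` never returns along `S`.
-/

open MeasureTheory Metric

lemma preimage_ball_inter_ball_eq_empty {X : Type*} [PseudoMetricSpace X] {g : X → X} {ε : ℝ}
    (hg : ∀ x, ε ≤ dist (g x) x) (x₀ : X) :
    g ⁻¹' ball x₀ (ε / 2) ∩ ball x₀ (ε / 2) = ∅ := by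
  refine Set.eq_empty_of_forall_notMem fun y ⟨hgy, hy⟩ => ?_
  have hgy : dist (g y) x₀ < ε / 2 := hgy
  have hy : dist y x₀ < ε / 2 := hy
  linarith [hg y, dist_triangle_right (g y) y x₀]

lemma measurePreserving_of_measure_preimage_eq {X : Type*} [MeasurableSpace X] {m : Measure X}
    {f : X → X} (hf : Measurable f) (hinv : ∀ A, MeasurableSet A → m (f ⁻¹' A) = m A) :
    MeasurePreserving f m m :=
  ⟨hf, Measure.ext fun A hA => (Measure.map_apply hf hA).trans (hinv A hA)⟩

theorem stmt_16_general (S : Set ℕ)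
    (X : Type) [MetricSpace X] [Nonempty X]
    [MeasurableSpace X] [BorelSpace X]
    (f : X → X) (hf : Continuous f)
    (ε : ℝ) (hε : 0 < ε)
    (hnonrec : ∀ n ∈ S, ∀ x : X, ε ≤ dist (f^[n] x) x)
    (m : Measure X) [IsProbabilityMeasure m]
    (hinv : ∀ A : Set X, MeasurableSet A → m (f ⁻¹' A) = m A)
    (hsupp : ∀ U : Set X, IsOpen U → U.Nonempty → 0 < m U) :
    (∃ U : Set X, IsOpen U ∧ U.Nonempty ∧ 0 < m U ∧
      ∀ n ∈ S, m (f^[n] ⁻¹' U ∩ U) = 0) ∧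
    ¬ (∀ (Y : Type) [MeasurableSpace Y] (ν : Measure Y),
        IsProbabilityMeasure ν → ∀ T : Y → Y, Measurable T →
          MeasurePreserving T ν ν →
          ∀ A : Set Y, MeasurableSet A → 0 < ν A →
            ∃ n ∈ S, 0 < ν (T^[n] ⁻¹' A ∩ A)) := by
  obtain ⟨x₀⟩ := ‹Nonempty X›
  have hU_ne : (ball x₀ (ε / 2)).Nonempty := nonempty_ball.2 (half_pos hε)
  have hU_pos : 0 < m (ball x₀ (ε / 2)) := hsupp _ isOpen_ball hU_ne
  have hno_return : ∀ n ∈ S, m (f^[n] ⁻¹' ball x₀ (ε / 2) ∩ ball x₀ (ε / 2)) = 0 := fun n hn => by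
    rw [preimage_ball_inter_ball_eq_empty (hnonrec n hn), measure_empty]
  refine ⟨⟨_, isOpen_ball, hU_ne, hU_pos, hno_return⟩, fun hpoincare => ?_⟩
  obtain ⟨n, hn, hpos⟩ := hpoincare X m ‹_› f hf.measurable
    (measurePreserving_of_measure_preimage_eq hf.measurable hinv) _ measurableSet_ball hU_pos
  exact hpos.ne' (hno_return n hn)

theorem stmt_16 (S : Set ℕ)
    (X : Type) [MetricSpace X] [CompactSpace X] [Nonempty X]
    [MeasurableSpace X] [BorelSpace X]
    (f : X → X) (hf : Continuous f)
    (hmin : ∀ F : Set X, IsClosed F → F.Nonempty → f '' F ⊆ F → F = Set.univ)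
    (ε : ℝ) (hε : 0 < ε)
    (hnonrec : ∀ n ∈ S, ∀ x : X, ε ≤ dist (f^[n] x) x)
    (m : Measure X) [IsProbabilityMeasure m]
    (hinv : ∀ A : Set X, MeasurableSet A → m (f ⁻¹' A) = m A)
    (hsupp : ∀ U : Set X, IsOpen U → U.Nonempty → 0 < m U) :
    (∃ U : Set X, IsOpen U ∧ U.Nonempty ∧ 0 < m U ∧
      ∀ n ∈ S, m (f^[n] ⁻¹' U ∩ U) = 0) ∧
    ¬ (∀ (Y : Type) [MeasurableSpace Y] (ν : Measure Y),
        IsProbabilityMeasure ν → ∀ T : Y → Y, Measurable T →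
          MeasurePreserving T ν ν →
          ∀ A : Set Y, MeasurableSet A → 0 < ν A →
            ∃ n ∈ S, 0 < ν (T^[n] ⁻¹' A ∩ A)) :=
  stmt_16_general S X f hf ε hε hnonrec m hinv hsupp
end
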